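/- arXiv:1503.06691 — 3 statements merged into one kernel-verified Lean document; each statement's English description precedes it below -/
import Mathlib

section
/- Let T₁ and T₂ be power bounded operators on complex Hilbert spaces H₁ and H₂, and let (X₁, U₁) and (X₂, U₂) be unitary asymptotes of T₁ and T₂, with U₁, U₂ acting on K₁, K₂ respectively. Then the pair (X₁ ⊕ X₂, U₁ ⊕ U₂), where X₁ ⊕ X₂ : H₁ ⊕ H₂ → K₁ ⊕ K₂ and U₁ ⊕ U₂ act on the Hilbert space orthogonal direct sums, is a unitary asymptote of the orthogonal sum T₁ ⊕ T₂ on H₁ ⊕ H₂. -/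
/-! A unitary asymptote is an initial unitary intertwining pair, and the orthogonal sum behaves
as a coproduct. A unitary pair `(X', U')` of `T₁ ⊕ T₂` restricts along the inclusions
`Hᵢ → H₁ ⊕ H₂` to unitary pairs of `Tᵢ`; the intertwiners `Zᵢ : Kᵢ → K'` given by the universal
properties glue to `[Z₁ Z₂] : K₁ ⊕ K₂ → K'`, and this is the only candidate since a map out of
`K₁ ⊕ K₂` is determined by its restrictions to `K₁` and `K₂`. -/

open Filter Topology

noncomputable section

variable {H : Type u} [NormedAddCommGroup H] [InnerProductSpace ℂ H]

/-- `(X, U)` is a unitary intertwining pair for `T`: `U` is unitary and `X T = U X`. -/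
def IsUnitaryPair {K : Type v} [NormedAddCommGroup K] [InnerProductSpace ℂ K] [CompleteSpace K]
    (T : H →L[ℂ] H) (X : H →L[ℂ] K) (U : K →L[ℂ] K) : Prop :=
  U ∈ unitary (K →L[ℂ] K) ∧ X ∘L T = U ∘L X

/-- The pair `(X, U)` is minimal: the smallest closed subspace of `K` containing
`U^{-n}(X(H))` for every `n ≥ 1` is all of `K`. -/
def IsMinimalPair {K : Type v} [NormedAddCommGroup K] [InnerProductSpace ℂ K] [CompleteSpace K]
    (X : H →L[ℂ] K) (U : K →L[ℂ] K) : Prop :=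
  (Submodule.span ℂ {k : K | ∃ (n : ℕ) (h : H),
      k = ((star U) ^ (n + 1)) (X h)}).topologicalClosure = ⊤

/-- `(X, U)` is a unitary asymptote of `T`: it is a unitary intertwining pair and for
every unitary intertwining pair `(X', U')` of `T` there is a unique `Z` with
`Z U = U' Z` and `X' = Z X`. -/
def IsUnitaryAsymptote {K : Type v} [NormedAddCommGroup K] [InnerProductSpace ℂ K]
    [CompleteSpace K] (T : H →L[ℂ] H) (X : H →L[ℂ] K) (U : K →L[ℂ] K) : Prop :=
  IsUnitaryPair T X U ∧
  ∀ (K' : Type v) [NormedAddCommGroup K'] [InnerProductSpace ℂ K'] [CompleteSpace K']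
    (X' : H →L[ℂ] K') (U' : K' →L[ℂ] K'), IsUnitaryPair T X' U' →
      ∃! Z : K →L[ℂ] K', Z ∘L U = U' ∘L Z ∧ X' = Z ∘L X

/-- `T` is power bounded. -/
def PowerBounded (T : H →L[ℂ] H) : Prop :=
  ∃ M : ℝ, ∀ n : ℕ, ‖T ^ n‖ ≤ M

/-- The orthogonal direct sum `A ⊕ B` of two operators, acting on the Hilbert-space
(ℓ²-) direct sum of the underlying spaces. -/
def directSum {E : Type*} [NormedAddCommGroup E] [InnerProductSpace ℂ E]
    {E' : Type*} [NormedAddCommGroup E'] [InnerProductSpace ℂ E']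
    {F : Type*} [NormedAddCommGroup F] [InnerProductSpace ℂ F]
    {F' : Type*} [NormedAddCommGroup F'] [InnerProductSpace ℂ F']
    (A : E →L[ℂ] F) (B : E' →L[ℂ] F') :
    WithLp 2 (E × E') →L[ℂ] WithLp 2 (F × F') :=
  (WithLp.prodContinuousLinearEquiv 2 ℂ F F').symm.toContinuousLinearMap ∘L
    (A.prodMap B) ∘L (WithLp.prodContinuousLinearEquiv 2 ℂ E E').toContinuousLinearMap

section DirectSum

variable {E : Type*} [NormedAddCommGroup E] [InnerProductSpace ℂ E]
    {E' : Type*} [NormedAddCommGroup E'] [InnerProductSpace ℂ E']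
    {F : Type*} [NormedAddCommGroup F] [InnerProductSpace ℂ F]
    {F' : Type*} [NormedAddCommGroup F'] [InnerProductSpace ℂ F']
    {G : Type*} [NormedAddCommGroup G] [InnerProductSpace ℂ G]
    {G' : Type*} [NormedAddCommGroup G'] [InnerProductSpace ℂ G']

theorem directSum_comp (A : F →L[ℂ] G) (B : F' →L[ℂ] G') (C : E →L[ℂ] F) (D : E' →L[ℂ] F') :
    directSum A B ∘L directSum C D = directSum (A ∘L C) (B ∘L D) := rfl

theorem adjoint_directSum [CompleteSpace E] [CompleteSpace E'] [CompleteSpace F]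
    [CompleteSpace F'] (A : E →L[ℂ] F) (B : E' →L[ℂ] F') :
    ContinuousLinearMap.adjoint (directSum A B) =
      directSum (ContinuousLinearMap.adjoint A) (ContinuousLinearMap.adjoint B) := by
  refine ((ContinuousLinearMap.eq_adjoint_iff _ _).mpr fun x y => ?_).symm
  simp [WithLp.prod_inner_apply, directSum, ContinuousLinearMap.adjoint_inner_left]

theorem directSum_mul (A C : E →L[ℂ] E) (B D : E' →L[ℂ] E') :
    directSum A B * directSum C D = directSum (A * C) (B * D) := rfl

theorem directSum_one : directSum (1 : E →L[ℂ] E) (1 : E' →L[ℂ] E') = 1 := rfl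

theorem directSum_mem_unitary [CompleteSpace E] [CompleteSpace E'] {U : E →L[ℂ] E}
    {V : E' →L[ℂ] E'} (hU : U ∈ unitary (E →L[ℂ] E)) (hV : V ∈ unitary (E' →L[ℂ] E')) :
    directSum U V ∈ unitary (WithLp 2 (E × E') →L[ℂ] WithLp 2 (E × E')) := by
  have hstar : star (directSum U V) = directSum (star U) (star V) := by
    simp only [ContinuousLinearMap.star_eq_adjoint, adjoint_directSum]
  rw [Unitary.mem_iff] at hU hV ⊢
  rw [hstar, directSum_mul, directSum_mul, hU.1, hU.2, hV.1, hV.2, directSum_one]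
  exact ⟨rfl, rfl⟩

variable (E E') in
def inl₂ : E →L[ℂ] WithLp 2 (E × E') :=
  (WithLp.prodContinuousLinearEquiv 2 ℂ E E').symm.toContinuousLinearMap ∘L
    ContinuousLinearMap.inl ℂ E E'

variable (E E') in
def inr₂ : E' →L[ℂ] WithLp 2 (E × E') :=
  (WithLp.prodContinuousLinearEquiv 2 ℂ E E').symm.toContinuousLinearMap ∘L
    ContinuousLinearMap.inr ℂ E E'

def coprod₂ (A : E →L[ℂ] F) (B : E' →L[ℂ] F) : WithLp 2 (E × E') →L[ℂ] F :=
  A.coprod B ∘L (WithLp.prodContinuousLinearEquiv 2 ℂ E E').toContinuousLinearMap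

theorem inl₂_add_inr₂ (x : WithLp 2 (E × E')) : inl₂ E E' x.fst + inr₂ E E' x.snd = x :=
  WithLp.ofLp_injective 2 <| Prod.ext (by simp [inl₂, inr₂]) (by simp [inl₂, inr₂])

theorem ext_inl₂_inr₂ {W W' : WithLp 2 (E × E') →L[ℂ] F}
    (hl : W ∘L inl₂ E E' = W' ∘L inl₂ E E') (hr : W ∘L inr₂ E E' = W' ∘L inr₂ E E') :
    W = W' := by
  ext x
  rw [← inl₂_add_inr₂ x, map_add, map_add]
  exact congrArg₂ (· + ·) (DFunLike.congr_fun hl x.fst) (DFunLike.congr_fun hr x.snd)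

@[simp]
theorem coprod₂_comp_inl₂ (A : E →L[ℂ] F) (B : E' →L[ℂ] F) : coprod₂ A B ∘L inl₂ E E' = A := by
  ext x; simp [coprod₂, inl₂]

@[simp]
theorem coprod₂_comp_inr₂ (A : E →L[ℂ] F) (B : E' →L[ℂ] F) : coprod₂ A B ∘L inr₂ E E' = B := by
  ext x; simp [coprod₂, inr₂]

theorem coprod₂_comp_directSum (A : F →L[ℂ] G) (B : F' →L[ℂ] G) (C : E →L[ℂ] F)
    (D : E' →L[ℂ] F') : coprod₂ A B ∘L directSum C D = coprod₂ (A ∘L C) (B ∘L D) := rfl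

theorem comp_coprod₂ (U : F →L[ℂ] G) (A : E →L[ℂ] F) (B : E' →L[ℂ] F) :
    U ∘L coprod₂ A B = coprod₂ (U ∘L A) (U ∘L B) := by
  ext x; simp [coprod₂]

theorem coprod₂_comp_inl₂_inr₂ (W : WithLp 2 (E × E') →L[ℂ] F) :
    coprod₂ (W ∘L inl₂ E E') (W ∘L inr₂ E E') = W :=
  ext_inl₂_inr₂ (coprod₂_comp_inl₂ _ _) (coprod₂_comp_inr₂ _ _)

theorem directSum_comp_inl₂ (A : E →L[ℂ] F) (B : E' →L[ℂ] F') :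
    directSum A B ∘L inl₂ E E' = inl₂ F F' ∘L A := by
  ext x; simp [directSum, inl₂]

theorem directSum_comp_inr₂ (A : E →L[ℂ] F) (B : E' →L[ℂ] F') :
    directSum A B ∘L inr₂ E E' = inr₂ F F' ∘L B := by
  ext x; simp [directSum, inr₂]

end DirectSum

section UnitaryPair

variable {H₁ H₂ : Type*} [NormedAddCommGroup H₁] [InnerProductSpace ℂ H₁]
    [NormedAddCommGroup H₂] [InnerProductSpace ℂ H₂]
    {K₁ K₂ : Type*} [NormedAddCommGroup K₁] [InnerProductSpace ℂ K₁]
    [NormedAddCommGroup K₂] [InnerProductSpace ℂ K₂]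
    {K : Type*} [NormedAddCommGroup K] [InnerProductSpace ℂ K]
    {T₁ : H₁ →L[ℂ] H₁} {T₂ : H₂ →L[ℂ] H₂} {X₁ : H₁ →L[ℂ] K₁} {X₂ : H₂ →L[ℂ] K₂}
    {U₁ : K₁ →L[ℂ] K₁} {U₂ : K₂ →L[ℂ] K₂}

theorem IsUnitaryPair.directSum [CompleteSpace K₁] [CompleteSpace K₂]
    (h₁ : IsUnitaryPair T₁ X₁ U₁) (h₂ : IsUnitaryPair T₂ X₂ U₂) :
    IsUnitaryPair (_root_.directSum T₁ T₂) (_root_.directSum X₁ X₂)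
      (_root_.directSum U₁ U₂) :=
  ⟨directSum_mem_unitary h₁.1 h₂.1, by rw [directSum_comp, directSum_comp, h₁.2, h₂.2]⟩

theorem IsUnitaryPair.comp_inl₂ [CompleteSpace K] {X : WithLp 2 (H₁ × H₂) →L[ℂ] K}
    {U : K →L[ℂ] K}
    (h : IsUnitaryPair (_root_.directSum T₁ T₂) X U) :
    IsUnitaryPair T₁ (X ∘L inl₂ H₁ H₂) U := by
  refine ⟨h.1, ?_⟩
  rw [ContinuousLinearMap.comp_assoc, ← directSum_comp_inl₂ T₁ T₂,
    ← ContinuousLinearMap.comp_assoc, h.2, ContinuousLinearMap.comp_assoc]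

theorem IsUnitaryPair.comp_inr₂ [CompleteSpace K] {X : WithLp 2 (H₁ × H₂) →L[ℂ] K}
    {U : K →L[ℂ] K}
    (h : IsUnitaryPair (_root_.directSum T₁ T₂) X U) :
    IsUnitaryPair T₂ (X ∘L inr₂ H₁ H₂) U := by
  refine ⟨h.1, ?_⟩
  rw [ContinuousLinearMap.comp_assoc, ← directSum_comp_inr₂ T₁ T₂,
    ← ContinuousLinearMap.comp_assoc, h.2, ContinuousLinearMap.comp_assoc]

def IsPairHom {H K K' : Type*} [NormedAddCommGroup H] [NormedAddCommGroup K]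
    [NormedAddCommGroup K'] [InnerProductSpace ℂ H] [InnerProductSpace ℂ K]
    [InnerProductSpace ℂ K'] (X : H →L[ℂ] K) (U : K →L[ℂ] K) (X' : H →L[ℂ] K')
    (U' : K' →L[ℂ] K') (Z : K →L[ℂ] K') : Prop :=
  Z ∘L U = U' ∘L Z ∧ X' = Z ∘L X

variable {K' : Type*} [NormedAddCommGroup K'] [InnerProductSpace ℂ K']
    {X' : WithLp 2 (H₁ × H₂) →L[ℂ] K'} {U' : K' →L[ℂ] K'}

theorem IsPairHom.comp_inl₂ {W : WithLp 2 (K₁ × K₂) →L[ℂ] K'}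
    (h : IsPairHom (_root_.directSum X₁ X₂) (_root_.directSum U₁ U₂) X' U' W) :
    IsPairHom X₁ U₁ (X' ∘L inl₂ H₁ H₂) U' (W ∘L inl₂ K₁ K₂) := by
  constructor
  · rw [ContinuousLinearMap.comp_assoc, ← directSum_comp_inl₂ U₁ U₂,
      ← ContinuousLinearMap.comp_assoc, h.1, ContinuousLinearMap.comp_assoc]
  · rw [h.2, ContinuousLinearMap.comp_assoc, directSum_comp_inl₂,
      ContinuousLinearMap.comp_assoc]

theorem IsPairHom.comp_inr₂ {W : WithLp 2 (K₁ × K₂) →L[ℂ] K'}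
    (h : IsPairHom (_root_.directSum X₁ X₂) (_root_.directSum U₁ U₂) X' U' W) :
    IsPairHom X₂ U₂ (X' ∘L inr₂ H₁ H₂) U' (W ∘L inr₂ K₁ K₂) := by
  constructor
  · rw [ContinuousLinearMap.comp_assoc, ← directSum_comp_inr₂ U₁ U₂,
      ← ContinuousLinearMap.comp_assoc, h.1, ContinuousLinearMap.comp_assoc]
  · rw [h.2, ContinuousLinearMap.comp_assoc, directSum_comp_inr₂,
      ContinuousLinearMap.comp_assoc]

theorem IsPairHom.coprod₂ {Z₁ : K₁ →L[ℂ] K'} {Z₂ : K₂ →L[ℂ] K'}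
    (h₁ : IsPairHom X₁ U₁ (X' ∘L inl₂ H₁ H₂) U' Z₁)
    (h₂ : IsPairHom X₂ U₂ (X' ∘L inr₂ H₁ H₂) U' Z₂) :
    IsPairHom (_root_.directSum X₁ X₂) (_root_.directSum U₁ U₂) X' U' (coprod₂ Z₁ Z₂) := by
  constructor
  · rw [coprod₂_comp_directSum, comp_coprod₂, h₁.1, h₂.1]
  · rw [coprod₂_comp_directSum, ← h₁.2, ← h₂.2, coprod₂_comp_inl₂_inr₂]

end UnitaryPair

theorem stmt_6_general {H₁ H₂ : Type u} {K₁ K₂ : Type v}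
    [NormedAddCommGroup H₁] [InnerProductSpace ℂ H₁]
    [NormedAddCommGroup H₂] [InnerProductSpace ℂ H₂]
    [NormedAddCommGroup K₁] [InnerProductSpace ℂ K₁] [CompleteSpace K₁]
    [NormedAddCommGroup K₂] [InnerProductSpace ℂ K₂] [CompleteSpace K₂]
    (T₁ : H₁ →L[ℂ] H₁) (T₂ : H₂ →L[ℂ] H₂)
    (X₁ : H₁ →L[ℂ] K₁) (U₁ : K₁ →L[ℂ] K₁)
    (X₂ : H₂ →L[ℂ] K₂) (U₂ : K₂ →L[ℂ] K₂)
    (h₁ : IsUnitaryAsymptote T₁ X₁ U₁) (h₂ : IsUnitaryAsymptote T₂ X₂ U₂) :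
    IsUnitaryAsymptote (directSum T₁ T₂) (directSum X₁ X₂) (directSum U₁ U₂) := by
  refine ⟨h₁.1.directSum h₂.1, fun K' _ _ _ X' U' hP => ?_⟩
  obtain ⟨Z₁, hZ₁, hZ₁_unique⟩ := h₁.2 K' _ U' hP.comp_inl₂
  obtain ⟨Z₂, hZ₂, hZ₂_unique⟩ := h₂.2 K' _ U' hP.comp_inr₂
  refine ⟨coprod₂ Z₁ Z₂, IsPairHom.coprod₂ hZ₁ hZ₂, fun W hW => ext_inl₂_inr₂ ?_ ?_⟩
  · rw [coprod₂_comp_inl₂]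
    exact hZ₁_unique _ (IsPairHom.comp_inl₂ hW)
  · rw [coprod₂_comp_inr₂]
    exact hZ₂_unique _ (IsPairHom.comp_inr₂ hW)

/-- If `(X₁, U₁)` and `(X₂, U₂)` are unitary asymptotes of the power bounded operators
`T₁` and `T₂`, then `(X₁ ⊕ X₂, U₁ ⊕ U₂)` is a unitary asymptote of `T₁ ⊕ T₂`. -/
theorem stmt_6 {H₁ H₂ : Type u} {K₁ K₂ : Type v}
    [NormedAddCommGroup H₁] [InnerProductSpace ℂ H₁]
    [NormedAddCommGroup H₂] [InnerProductSpace ℂ H₂]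
    [NormedAddCommGroup K₁] [InnerProductSpace ℂ K₁] [CompleteSpace K₁]
    [NormedAddCommGroup K₂] [InnerProductSpace ℂ K₂] [CompleteSpace K₂]
    (T₁ : H₁ →L[ℂ] H₁) (T₂ : H₂ →L[ℂ] H₂)
    (hT₁ : PowerBounded T₁) (hT₂ : PowerBounded T₂)
    (X₁ : H₁ →L[ℂ] K₁) (U₁ : K₁ →L[ℂ] K₁)
    (X₂ : H₂ →L[ℂ] K₂) (U₂ : K₂ →L[ℂ] K₂)
    (h₁ : IsUnitaryAsymptote T₁ X₁ U₁) (h₂ : IsUnitaryAsymptote T₂ X₂ U₂) :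
    IsUnitaryAsymptote (directSum T₁ T₂) (directSum X₁ X₂) (directSum U₁ U₂) :=
  stmt_6_general T₁ T₂ X₁ U₁ X₂ U₂ h₁ h₂

end
end

section
/- Let T be a power bounded operator on a complex Hilbert space H with unitary asymptote (X, U), U acting on K, and let M be a closed subspace of H invariant for T (T M ⊆ M). Let M̃ be the smallest closed subspace of K containing U^{-n}(X(M)) for every integer n ≥ 1. Then M̃ is a reducing subspace for U, X maps M into M̃, and the pair (X|_M, U|_{M̃}), consisting of the restriction X|_M : M → M̃ and the unitary restriction U|_{M̃}, is a unitary asymptote of the restriction T|_M. -/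
open Filter Topology

noncomputable section

variable {H : Type u} [NormedAddCommGroup H] [InnerProductSpace ℂ H]

instance {K : Type v} [NormedAddCommGroup K] [InnerProductSpace ℂ K] [CompleteSpace K]
    (S : Submodule ℂ K) : CompleteSpace S.topologicalClosure :=
  S.isClosed_topologicalClosure.completeSpace_coe

/-- The restriction of an operator to an invariant subspace. -/
def restrictOp (T : H →L[ℂ] H) (M : Submodule ℂ H) (hM : ∀ x ∈ M, T x ∈ M) :
    M →L[ℂ] M :=
  (T ∘L M.subtypeL).codRestrict M fun x => hM x x.2

/-- The smallest closed subspace of `K` containing `U^{-n}(X(M))` for every `n ≥ 1`. -/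
def tildeM {K : Type v} [NormedAddCommGroup K] [InnerProductSpace ℂ K] [CompleteSpace K]
    (X : H →L[ℂ] K) (U : K →L[ℂ] K) (M : Submodule ℂ H) : Submodule ℂ K :=
  (Submodule.span ℂ {k : K | ∃ (n : ℕ) (x : H), x ∈ M ∧
      k = ((star U) ^ (n + 1)) (X x)}).topologicalClosure

instance {K : Type v} [NormedAddCommGroup K] [InnerProductSpace ℂ K] [CompleteSpace K]
    (X : H →L[ℂ] K) (U : K →L[ℂ] K) (M : Submodule ℂ H) :
    CompleteSpace (tildeM X U M) :=
  (Submodule.isClosed_topologicalClosure _).completeSpace_coe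

/-!
Every unitary intertwining pair `(X', U')` of `T|_M` extends to a unitary intertwining pair
`(Y, U')` of `T`: extend `X'` boundedly to some `Z₀` on `H`, and let `Y` be a weak-operator limit,
along an ultrafilter, of the Cesàro means of `U'^{-n} Z₀ Tⁿ`. Power boundedness keeps these
uniformly bounded, the Cesàro averaging makes `Y T = U' Y` hold in the limit, and on `M` every
term equals `X'` already. The universal property of `(X, U)` factors `Y = Z X`, and `Z` restricted
to `M̃` is the required intertwiner. It is unique because every intertwiner sends the generators
`U^{-n} X x` of `M̃` to `U'^{-n} X' x`. Finally `M̃` reduces `U` because `U` and `U⋆` map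
generators to generators or into `X(M) = U⋆ X T(M)`.
-/

open scoped InnerProductSpace
open Bornology

theorem IsCompact.tendsto_limUnder_of_ultrafilter {X ι : Type*} [TopologicalSpace X] [Nonempty X]
    {s : Set X} (hs : IsCompact s) (𝒰 : Ultrafilter ι) {f : ι → X} (hf : ∀ i, f i ∈ s) :
    Tendsto f 𝒰 (𝓝 (limUnder (𝒰 : Filter ι) f)) := by
  obtain ⟨x, -, hx⟩ := hs.ultrafilter_le_nhds (𝒰.map f) <| by
    rw [Ultrafilter.coe_map, le_principal_iff]
    exact mem_map.2 (univ_mem' hf)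
  exact tendsto_nhds_limUnder ⟨x, hx⟩

section WeakUltralimit

variable {ι : Type*} (𝕜 : Type*) {E F : Type*} [RCLike 𝕜] [NormedAddCommGroup E] [NormedSpace 𝕜 E]
  [NormedAddCommGroup F] [InnerProductSpace 𝕜 F] (𝒰 : Ultrafilter ι)

theorem tendsto_inner_limUnder_of_norm_le {x : ι → F} {C : ℝ} (hx : ∀ i, ‖x i‖ ≤ C) (k : F) :
    Tendsto (fun i => ⟪x i, k⟫_𝕜) 𝒰 (𝓝 (limUnder (𝒰 : Filter ι) fun i => ⟪x i, k⟫_𝕜)) :=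
  (isCompact_closedBall (0 : 𝕜) (C * ‖k‖)).tendsto_limUnder_of_ultrafilter 𝒰 fun i =>
    mem_closedBall_zero_iff.2 <| (norm_inner_le_norm _ _).trans <|
      mul_le_mul_of_nonneg_right (hx i) (norm_nonneg k)

variable [CompleteSpace F]

def weakUltralim (x : ι → F) {C : ℝ} (hx : ∀ i, ‖x i‖ ≤ C) : F :=
  (InnerProductSpace.toDual 𝕜 F).symm <|
    .ofTendstoOfBoundedRange _ (fun i => InnerProductSpace.toDual 𝕜 F (x i))
      (tendsto_pi_nhds.2 (tendsto_inner_limUnder_of_norm_le 𝕜 𝒰 hx))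
      (isBounded_iff_forall_norm_le.2 ⟨C, by rintro _ ⟨i, rfl⟩; simpa using hx i⟩)

variable {𝕜 𝒰} {x : ι → F} {C : ℝ} (hx : ∀ i, ‖x i‖ ≤ C)

theorem tendsto_inner_weakUltralim (k : F) :
    Tendsto (fun i => ⟪x i, k⟫_𝕜) 𝒰 (𝓝 ⟪weakUltralim 𝕜 𝒰 x hx, k⟫_𝕜) := by
  rw [weakUltralim, InnerProductSpace.toDual_symm_apply,
    ContinuousLinearMap.ofTendstoOfBoundedRange_apply]
  exact tendsto_inner_limUnder_of_norm_le 𝕜 𝒰 hx k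

theorem weakUltralim_eq_of_tendsto {y : F}
    (hy : ∀ k, Tendsto (fun i => ⟪x i, k⟫_𝕜) 𝒰 (𝓝 ⟪y, k⟫_𝕜)) : weakUltralim 𝕜 𝒰 x hx = y :=
  ext_inner_right 𝕜 fun k => tendsto_nhds_unique (tendsto_inner_weakUltralim hx k) (hy k)

theorem norm_weakUltralim_le : ‖weakUltralim 𝕜 𝒰 x hx‖ ≤ C := by
  set y := weakUltralim 𝕜 𝒰 x hx
  have : Nonempty ι := Filter.NeBot.nonempty (𝒰 : Filter ι)
  have hC : 0 ≤ C := (norm_nonneg _).trans (hx (Classical.arbitrary ι))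
  have hy : ‖⟪y, y⟫_𝕜‖ ≤ C * ‖y‖ :=
    le_of_tendsto (tendsto_inner_weakUltralim hx y).norm <| univ_mem' fun i =>
      (norm_inner_le_norm _ _).trans (mul_le_mul_of_nonneg_right (hx i) (norm_nonneg y))
  rw [inner_self_eq_norm_sq_to_K, norm_pow, RCLike.norm_ofReal, abs_norm, sq] at hy
  rcases (norm_nonneg y).eq_or_lt with h | h
  · exact h ▸ hC
  · exact le_of_mul_le_mul_right hy h

end WeakUltralimit

section WotUltralimit

variable {ι : Type*} (𝕜 : Type*) {E F : Type*} [RCLike 𝕜] [NormedAddCommGroup E] [NormedSpace 𝕜 E]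
  [NormedAddCommGroup F] [InnerProductSpace 𝕜 F] [CompleteSpace F] (𝒰 : Ultrafilter ι)

def wotUltralim (A : ι → E →L[𝕜] F) {C : ℝ} (hA : ∀ i, ‖A i‖ ≤ C) : E →L[𝕜] F :=
  LinearMap.mkContinuous
    { toFun h := weakUltralim 𝕜 𝒰 (A · h) fun i => (A i).le_of_opNorm_le (hA i) h
      map_add' h₁ h₂ := weakUltralim_eq_of_tendsto _ fun k => by
        simpa only [map_add, inner_add_left] using
          (tendsto_inner_weakUltralim _ k).add (tendsto_inner_weakUltralim _ k)
      map_smul' c h := weakUltralim_eq_of_tendsto _ fun k => by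
        simpa only [map_smul, inner_smul_left, RingHom.id_apply] using
          (tendsto_inner_weakUltralim _ k).const_mul (starRingEnd 𝕜 c) }
    C fun h => norm_weakUltralim_le fun i => (A i).le_of_opNorm_le (hA i) h

variable {𝕜 𝒰} {A : ι → E →L[𝕜] F} {C : ℝ} (hA : ∀ i, ‖A i‖ ≤ C)

theorem wotUltralim_apply (h : E) : wotUltralim 𝕜 𝒰 A hA h =
    weakUltralim 𝕜 𝒰 (A · h) (fun i => (A i).le_of_opNorm_le (hA i) h) :=
  rfl

theorem tendsto_inner_wotUltralim (h : E) (k : F) :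
    Tendsto (fun i => ⟪A i h, k⟫_𝕜) 𝒰 (𝓝 ⟪wotUltralim 𝕜 𝒰 A hA h, k⟫_𝕜) := by
  rw [wotUltralim_apply]
  exact tendsto_inner_weakUltralim _ k

theorem wotUltralim_apply_eq_of_eventually {h : E} {y : F} (hy : ∀ᶠ i in 𝒰, A i h = y) :
    wotUltralim 𝕜 𝒰 A hA h = y :=
  ext_inner_right 𝕜 fun k => tendsto_nhds_unique (tendsto_inner_wotUltralim hA h k) <|
    tendsto_const_nhds.congr' <| hy.mono fun i hi => by simp only [hi]

theorem wotUltralim_comp_eq_comp_wotUltralim {S : E →L[𝕜] E} {V : F →L[𝕜] F}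
    (hSV : Tendsto (fun i => A i ∘L S - V ∘L A i) 𝒰 (𝓝 0)) :
    wotUltralim 𝕜 𝒰 A hA ∘L S = V ∘L wotUltralim 𝕜 𝒰 A hA := by
  ext h
  simp only [ContinuousLinearMap.comp_apply]
  refine ext_inner_right 𝕜 fun k => tendsto_nhds_unique (tendsto_inner_wotUltralim hA (S h) k) ?_
  have hdiff : Tendsto (fun i => ⟪(A i ∘L S - V ∘L A i) h, k⟫_𝕜) 𝒰 (𝓝 0) := by
    simpa using (((ContinuousLinearMap.apply 𝕜 F h).continuous.tendsto 0).comp hSV).inner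
      tendsto_const_nhds (y := k)
  have hV : Tendsto (fun i => ⟪V (A i h), k⟫_𝕜) 𝒰 (𝓝 ⟪V (wotUltralim 𝕜 𝒰 A hA h), k⟫_𝕜) := by
    simpa only [← ContinuousLinearMap.adjoint_inner_right] using
      tendsto_inner_wotUltralim hA h (ContinuousLinearMap.adjoint V k)
  rw [← zero_add ⟪_, k⟫_𝕜]
  refine (hdiff.add hV).congr fun i => ?_
  simp [inner_sub_left]

end WotUltralimit

section BirkhoffAverage

variable {α 𝕜 M : Type*} [RCLike 𝕜] [NormedAddCommGroup M] [NormedSpace 𝕜 M]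

theorem norm_birkhoffAverage_le {f : α → α} {g : α → M} {x : α} {B : ℝ}
    (hB : ∀ k, ‖g (f^[k] x)‖ ≤ B) (n : ℕ) : ‖birkhoffAverage 𝕜 f g n x‖ ≤ B := by
  rcases n.eq_zero_or_pos with rfl | hn
  · simpa using (norm_nonneg _).trans (hB 0)
  rw [birkhoffAverage, norm_smul, norm_inv, RCLike.norm_natCast, inv_mul_le_iff₀ (by positivity)]
  calc ‖birkhoffSum f g n x‖ ≤ ∑ k ∈ Finset.range n, ‖g (f^[k] x)‖ := norm_sum_le _ _
    _ ≤ n * B := (Finset.sum_le_sum fun k _ => hB k).trans (by simp)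

theorem birkhoffAverage_eq_of_forall_apply_iterate_eq {f : α → α} {g : α → M} {x : α} {c : M}
    (hc : ∀ k, g (f^[k] x) = c) {n : ℕ} (hn : n ≠ 0) : birkhoffAverage 𝕜 f g n x = c := by
  simp [birkhoffAverage, birkhoffSum, hc, ← Nat.cast_smul_eq_nsmul 𝕜, hn]

end BirkhoffAverage

section Operators

theorem ContinuousLinearMap.apply_pow_apply_of_comp_eq {𝕜 E G : Type*} [RCLike 𝕜]
    [NormedAddCommGroup E] [NormedSpace 𝕜 E] [NormedAddCommGroup G] [NormedSpace 𝕜 G]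
    {W : E →L[𝕜] G} {A : E →L[𝕜] E} {B : G →L[𝕜] G} (h : W ∘L A = B ∘L W) (n : ℕ) (x : E) :
    W ((A ^ n) x) = (B ^ n) (W x) := by
  have hsemi : Function.Semiconj W A B := fun y => congr($h y)
  simpa only [FunLike.coe_pow_eq_iterate] using (hsemi.iterate_right n) x

theorem ContinuousLinearMap.restrict_pow_apply {𝕜 E : Type*} [RCLike 𝕜] [NormedAddCommGroup E]
    [NormedSpace 𝕜 E] {V : E →L[𝕜] E} {N : Submodule 𝕜 E} (hV : ∀ k ∈ N, V k ∈ N) (n : ℕ) (q : N) :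
    ((V.restrict hV ^ n) q : E) = (V ^ n) q :=
  apply_pow_apply_of_comp_eq (W := N.subtypeL) rfl n q

theorem Submodule.mapsTo_topologicalClosure_span {𝕜 E F : Type*} [RCLike 𝕜] [NormedAddCommGroup E]
    [NormedSpace 𝕜 E] [NormedAddCommGroup F] [NormedSpace 𝕜 F] {s : Set E} {N : Submodule 𝕜 F}
    (hN : IsClosed (N : Set F)) (f : E →L[𝕜] F) (hf : ∀ k ∈ s, f k ∈ N) :
    ∀ k ∈ (span 𝕜 s).topologicalClosure, f k ∈ N := fun _ hk =>
  (span 𝕜 s).topologicalClosure_minimal (t := N.comap (f : E →ₗ[𝕜] F)) (span_le.2 hf)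
    (hN.preimage f.continuous) hk

theorem ContinuousLinearMap.ext_on_topologicalClosure_span {𝕜 K G : Type*} [RCLike 𝕜]
    [NormedAddCommGroup K] [NormedSpace 𝕜 K] [NormedAddCommGroup G] [NormedSpace 𝕜 G] {s : Set K}
    {W₁ W₂ : (Submodule.span 𝕜 s).topologicalClosure →L[𝕜] G}
    (h : ∀ k (hk : k ∈ s), W₁ ⟨k, Submodule.le_topologicalClosure _ (Submodule.subset_span hk)⟩ =
      W₂ ⟨k, Submodule.le_topologicalClosure _ (Submodule.subset_span hk)⟩) : W₁ = W₂ := by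
  refine ext_on (s := Subtype.val ⁻¹' s) ?_ fun q hq => h q hq
  rw [Subtype.dense_iff]
  refine (Submodule.topologicalClosure_coe _).trans_subset (closure_mono ?_)
  exact (Submodule.span_le (p := (Submodule.span 𝕜 _).map (Submodule.subtype _))).2 fun k hk =>
    ⟨⟨k, Submodule.le_topologicalClosure _ (Submodule.subset_span hk)⟩,
      Submodule.subset_span hk, rfl⟩

variable {𝕜 K G : Type*} [RCLike 𝕜] [NormedAddCommGroup K] [InnerProductSpace 𝕜 K]
  [CompleteSpace K] [NormedAddCommGroup G] [InnerProductSpace 𝕜 G] [CompleteSpace G]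

theorem ContinuousLinearMap.comp_star_eq_star_comp_of_mem_unitary {A : K →L[𝕜] K}
    {B : G →L[𝕜] G} (hA : A ∈ unitary (K →L[𝕜] K)) (hB : B ∈ unitary (G →L[𝕜] G))
    {W : K →L[𝕜] G} (h : W ∘L A = B ∘L W) : W ∘L star A = star B ∘L W :=
  calc W ∘L star A = (star B * B) ∘L W ∘L star A := by
        rw [Unitary.star_mul_self_of_mem hB, one_def, id_comp]
    _ = star B ∘L W ∘L (A * star A) := by rw [mul_def, mul_def, comp_assoc, ← comp_assoc W, h]; rfl
    _ = star B ∘L W := by rw [Unitary.mul_star_self_of_mem hA, one_def, comp_id]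

variable {N : Submodule 𝕜 K} [CompleteSpace N] {V : K →L[𝕜] K}

theorem ContinuousLinearMap.star_restrict (hV : ∀ k ∈ N, V k ∈ N) (hV' : ∀ k ∈ N, star V k ∈ N) :
    star (V.restrict hV) = (star V).restrict hV' := by
  refine ((eq_adjoint_iff _ _).2 fun k l => ?_).symm
  simp only [Submodule.coe_inner, coe_restrict_apply, star_eq_adjoint, adjoint_inner_left]

theorem ContinuousLinearMap.restrict_mem_unitary (hU : V ∈ unitary (K →L[𝕜] K))
    (hV : ∀ k ∈ N, V k ∈ N) (hV' : ∀ k ∈ N, star V k ∈ N) :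
    V.restrict hV ∈ unitary (N →L[𝕜] N) := by
  rw [Unitary.mem_iff, star_restrict hV hV']
  constructor <;> ext k
  · exact congr($(Unitary.star_mul_self_of_mem hU) (k : K))
  · exact congr($(Unitary.mul_star_self_of_mem hU) (k : K))

end Operators

section Extension

open UniformSpace

/-- Extend along the completion, then project orthogonally onto the closure of `M` there. -/
theorem Submodule.exists_extension_continuousLinearMap {𝕜 E F : Type*} [RCLike 𝕜]
    [NormedAddCommGroup E] [InnerProductSpace 𝕜 E] [NormedAddCommGroup F] [NormedSpace 𝕜 F]
    [CompleteSpace F] (M : Submodule 𝕜 E) (f : M →L[𝕜] F) :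
    ∃ g : E →L[𝕜] F, ∀ x : M, g x = f x := by
  let ι : E →L[𝕜] Completion E := Completion.toComplL
  let N := (M.map (ι : E →ₗ[𝕜] Completion E)).topologicalClosure
  have : CompleteSpace N := (Submodule.isClosed_topologicalClosure _).completeSpace_coe
  let j : M →L[𝕜] N := (ι ∘L M.subtypeL).codRestrict N fun x =>
    Submodule.le_topologicalClosure _ (Submodule.mem_map_of_mem x.2)
  have hj : Isometry j := AddMonoidHomClass.isometry_of_norm j fun x => Completion.norm_coe _
  have hjd : DenseRange j := by
    rw [DenseRange, Subtype.dense_iff]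
    refine (Submodule.topologicalClosure_coe _).trans_subset (closure_mono ?_)
    rintro _ ⟨x, hx, rfl⟩
    exact ⟨j ⟨x, hx⟩, ⟨_, rfl⟩, rfl⟩
  refine ⟨f.extend j ∘L N.orthogonalProjectionOnto ∘L ι, fun x => ?_⟩
  have hx : N.orthogonalProjectionOnto (ι x) = j x :=
    Submodule.orthogonalProjectionOnto_mem_subspace_eq_self (j x)
  simp only [ContinuousLinearMap.comp_apply, hx]
  exact f.extend_eq hjd hj.isUniformInducing x

end Extension

section Intertwiner

variable {𝕜 E F : Type*} [RCLike 𝕜] [NormedAddCommGroup E] [NormedSpace 𝕜 E]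
  [NormedAddCommGroup F] [InnerProductSpace 𝕜 F] [CompleteSpace F]

/-- `Y` is a weak-operator limit point, along an ultrafilter, of the Cesàro means of
`(V⋆)ⁿ Z₀ Tⁿ`. -/
theorem exists_comp_eq_comp_of_norm_pow_le {T : E →L[𝕜] E} {C : ℝ} (hT : ∀ n, ‖T ^ n‖ ≤ C)
    {V : F →L[𝕜] F} (hV : V ∈ unitary (F →L[𝕜] F)) (Z₀ : E →L[𝕜] F) :
    ∃ Y : E →L[𝕜] F, Y ∘L T = V ∘L Y ∧
      ∀ x, (∀ n, (star V ^ n) (Z₀ ((T ^ n) x)) = Z₀ x) → Y x = Z₀ x := by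
  obtain ⟨𝒰, h𝒰⟩ := Ultrafilter.exists_le (atTop : Filter ℕ)
  let Φ : (E →L[𝕜] F) →L[𝕜] (E →L[𝕜] F) :=
    ContinuousLinearMap.compL 𝕜 E F F (star V) ∘L (ContinuousLinearMap.compL 𝕜 E E F).flip T
  have hΦ : ∀ n Z, Φ^[n] Z = (star V ^ n) ∘L Z ∘L (T ^ n) := by
    intro n
    induction n with
    | zero => intro Z; rfl
    | succ n ih =>
      intro Z
      rw [Function.iterate_succ_apply', ih, pow_succ', pow_succ]
      rfl
  have hbound : ∀ n, ‖Φ^[n] Z₀‖ ≤ ‖Z₀‖ * C := fun n =>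
    calc ‖Φ^[n] Z₀‖ ≤ ‖Z₀ ∘L T ^ n‖ := by
          rw [hΦ]
          refine ContinuousLinearMap.opNorm_le_bound _ (norm_nonneg _) fun x => ?_
          rw [ContinuousLinearMap.comp_apply, ContinuousLinearMap.norm_map_of_mem_unitary
            (pow_mem (Unitary.star_mem hV) n)]
          exact (Z₀ ∘L T ^ n).le_opNorm x
      _ ≤ ‖Z₀‖ * ‖T ^ n‖ := ContinuousLinearMap.opNorm_comp_le _ _
      _ ≤ ‖Z₀‖ * C := by gcongr; exact hT n
  let A N := birkhoffAverage 𝕜 Φ id N Z₀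
  have hA : ∀ N, ‖A N‖ ≤ ‖Z₀‖ * C := norm_birkhoffAverage_le hbound
  refine ⟨wotUltralim 𝕜 𝒰 A hA, wotUltralim_comp_eq_comp_wotUltralim hA ?_,
    fun x hx => wotUltralim_apply_eq_of_eventually hA ?_⟩
  · have hshift : ∀ N, A N ∘L T - V ∘L A N = V ∘L (birkhoffAverage 𝕜 Φ id N (Φ Z₀) - A N) := by
      intro N
      have hΦA : Φ (A N) = birkhoffAverage 𝕜 Φ id N (Φ Z₀) := by
        simp only [A, birkhoffAverage, birkhoffSum, id, map_smul, map_sum]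
        congr 1
        exact Finset.sum_congr rfl fun k _ => (Function.Commute.iterate_self Φ k Z₀).symm
      rw [← hΦA, ContinuousLinearMap.comp_sub]
      change _ = V ∘L (star V ∘L (A N ∘L T)) - _
      rw [← ContinuousLinearMap.comp_assoc, ← ContinuousLinearMap.mul_def,
        Unitary.mul_star_self_of_mem hV, ContinuousLinearMap.one_def, ContinuousLinearMap.id_comp]
    have := tendsto_birkhoffAverage_apply_sub_birkhoffAverage (𝕜 := 𝕜) (f := Φ) (g := id) (x := Z₀)
      (isBounded_iff_forall_norm_le.2 ⟨_, by rintro _ ⟨n, rfl⟩; exact hbound n⟩)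
    have hlim := ((ContinuousLinearMap.compL 𝕜 E F F V).continuous.tendsto 0).comp this
    rw [map_zero] at hlim
    exact (hlim.mono_left h𝒰).congr fun N => (hshift N).symm
  · filter_upwards [h𝒰 (eventually_ne_atTop 0)] with N hN
    rw [← ContinuousLinearMap.apply_apply x (A N), map_birkhoffAverage 𝕜 𝕜]
    exact birkhoffAverage_eq_of_forall_apply_iterate_eq (fun k => by simpa [hΦ] using hx k) hN

end Intertwiner

section UnitaryAsymptote

theorem IsUnitaryPair.exists_extension {T : H →L[ℂ] H} (hT : PowerBounded T) {M : Submodule ℂ H}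
    {hM : ∀ x ∈ M, T x ∈ M} {K : Type*} [NormedAddCommGroup K] [InnerProductSpace ℂ K]
    [CompleteSpace K] {X : M →L[ℂ] K} {U : K →L[ℂ] K} (hp : IsUnitaryPair (restrictOp T M hM) X U) :
    ∃ Y : H →L[ℂ] K, IsUnitaryPair T Y U ∧ ∀ x : M, Y x = X x := by
  obtain ⟨C, hC⟩ := hT
  obtain ⟨Z₀, hZ₀⟩ := M.exists_extension_continuousLinearMap X
  obtain ⟨Y, hYT, hY⟩ := exists_comp_eq_comp_of_norm_pow_le hC hp.1 Z₀
  refine ⟨Y, ⟨hp.1, hYT⟩, fun x => (hY x fun n => ?_).trans (hZ₀ x)⟩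
  rw [show (T ^ n) (x : H) = ((restrictOp T M hM ^ n) x : H) from
    (ContinuousLinearMap.restrict_pow_apply hM n x).symm, hZ₀, hZ₀,
    ContinuousLinearMap.apply_pow_apply_of_comp_eq hp.2, ← star_pow, ← mul_apply_eq_comp,
    Unitary.star_mul_self_of_mem (pow_mem hp.1 n), one_apply_eq_self]

variable {K : Type*} [NormedAddCommGroup K] [InnerProductSpace ℂ K] [CompleteSpace K]
  {T : H →L[ℂ] H} {X : H →L[ℂ] K} {U : K →L[ℂ] K} {M : Submodule ℂ H}

theorem IsUnitaryPair.map_apply (hp : IsUnitaryPair T X U) {x : H} : X (T x) = U (X x) :=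
  DFunLike.congr_fun hp.2 x

theorem star_pow_succ_apply_mem_tildeM {x : H} (hx : x ∈ M) (n : ℕ) :
    (star U ^ (n + 1)) (X x) ∈ tildeM X U M :=
  Submodule.le_topologicalClosure _ (Submodule.subset_span ⟨n, x, hx, rfl⟩)

theorem star_mapsTo_tildeM : ∀ k ∈ tildeM X U M, star U k ∈ tildeM X U M :=
  Submodule.mapsTo_topologicalClosure_span (Submodule.isClosed_topologicalClosure _) _ <| by
    rintro _ ⟨n, x, hx, rfl⟩
    rw [← mul_apply_eq_comp, ← pow_succ']
    exact star_pow_succ_apply_mem_tildeM hx (n + 1)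

theorem IsUnitaryPair.apply_mem_tildeM (hp : IsUnitaryPair T X U) (hM : ∀ x ∈ M, T x ∈ M)
    {x : H} (hx : x ∈ M) : X x ∈ tildeM X U M := by
  have h := star_pow_succ_apply_mem_tildeM (X := X) (U := U) (hM x hx) 0
  rwa [zero_add, pow_one, hp.map_apply, ← mul_apply_eq_comp, Unitary.star_mul_self_of_mem hp.1,
    one_apply_eq_self] at h

theorem IsUnitaryPair.mapsTo_tildeM (hp : IsUnitaryPair T X U) (hM : ∀ x ∈ M, T x ∈ M) :
    ∀ k ∈ tildeM X U M, U k ∈ tildeM X U M :=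
  Submodule.mapsTo_topologicalClosure_span (Submodule.isClosed_topologicalClosure _) _ <| by
    rintro _ ⟨n, x, hx, rfl⟩
    rw [← mul_apply_eq_comp, pow_succ', ← mul_assoc, Unitary.mul_star_self_of_mem hp.1, one_mul]
    rcases n with _ | n
    · rw [pow_zero, one_apply_eq_self]
      exact hp.apply_mem_tildeM hM hx
    · exact star_pow_succ_apply_mem_tildeM hx n

theorem IsUnitaryPair.apply_star_pow_succ_of_intertwines (hp : IsUnitaryPair T X U)
    (hM : ∀ x ∈ M, T x ∈ M) {G : Type*} [NormedAddCommGroup G] [InnerProductSpace ℂ G]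
    [CompleteSpace G] {X' : M →L[ℂ] G} {U' : G →L[ℂ] G} (hU' : U' ∈ unitary (G →L[ℂ] G))
    {W : tildeM X U M →L[ℂ] G}
    (hW : W ∘L U.restrict (hp.mapsTo_tildeM hM) = U' ∘L W ∧
      X' = W ∘L X.restrict fun _ hx => hp.apply_mem_tildeM hM hx)
    (n : ℕ) {x : H} (hx : x ∈ M) :
    W ⟨(star U ^ (n + 1)) (X x), star_pow_succ_apply_mem_tildeM hx n⟩ =
      (star U' ^ (n + 1)) (X' ⟨x, hx⟩) := by
  have hWstar := ContinuousLinearMap.comp_star_eq_star_comp_of_mem_unitary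
    (U.restrict_mem_unitary hp.1 _ fun _ => star_mapsTo_tildeM _) hU' hW.1
  rw [ContinuousLinearMap.star_restrict _ fun _ => star_mapsTo_tildeM _] at hWstar
  rw [hW.2, ContinuousLinearMap.comp_apply,
    ← ContinuousLinearMap.apply_pow_apply_of_comp_eq hWstar]
  congr 1
  ext
  rw [ContinuousLinearMap.restrict_pow_apply]
  rfl

end UnitaryAsymptote

theorem stmt_7_general {K : Type v} [NormedAddCommGroup K] [InnerProductSpace ℂ K] [CompleteSpace K]
    (T : H →L[ℂ] H) (hT : PowerBounded T) (X : H →L[ℂ] K) (U : K →L[ℂ] K)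
    (hua : IsUnitaryAsymptote T X U)
    (M : Submodule ℂ H) (hMinv : ∀ x ∈ M, T x ∈ M) :
    (∀ k ∈ tildeM X U M, U k ∈ tildeM X U M) ∧
    (∀ k ∈ tildeM X U M, (star U) k ∈ tildeM X U M) ∧
    (∀ x ∈ M, X x ∈ tildeM X U M) ∧
    ∃ (XM : M →L[ℂ] tildeM X U M) (UM : tildeM X U M →L[ℂ] tildeM X U M),
      (∀ x : M, (XM x : K) = X (x : H)) ∧
      (∀ k : tildeM X U M, (UM k : K) = U (k : K)) ∧
      IsUnitaryAsymptote (restrictOp T M hMinv) XM UM := by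
  have hp := hua.1
  have hXM : ∀ x ∈ M, X x ∈ tildeM X U M := fun _ hx => hp.apply_mem_tildeM hMinv hx
  have hUM := hp.mapsTo_tildeM hMinv
  refine ⟨hUM, fun _ => star_mapsTo_tildeM _, hXM, X.restrict hXM, U.restrict hUM, fun _ => rfl,
    fun _ => rfl, ⟨U.restrict_mem_unitary hp.1 hUM fun _ => star_mapsTo_tildeM _, ?_⟩,
    fun K' _ _ _ X' U' hp' => ?_⟩
  · ext x
    exact hp.map_apply
  obtain ⟨Y, hY, hYX⟩ := hp'.exists_extension hT
  obtain ⟨Z, ⟨hZU, hZX⟩, -⟩ := hua.2 K' Y U' hY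
  have hZ : (Z ∘L (tildeM X U M).subtypeL) ∘L U.restrict hUM =
        U' ∘L Z ∘L (tildeM X U M).subtypeL ∧
      X' = (Z ∘L (tildeM X U M).subtypeL) ∘L X.restrict hXM := by
    refine ⟨?_, ?_⟩ <;> ext x
    · exact DFunLike.congr_fun hZU (x : K)
    · exact (hYX x).symm.trans (DFunLike.congr_fun hZX (x : H))
  refine ⟨_, hZ, fun W hW => ContinuousLinearMap.ext_on_topologicalClosure_span ?_⟩
  rintro _ ⟨n, x, hx, rfl⟩
  exact (hp.apply_star_pow_succ_of_intertwines hMinv hp'.1 hW n hx).trans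
    (hp.apply_star_pow_succ_of_intertwines hMinv hp'.1 hZ n hx).symm

/-- If `(X, U)` is a unitary asymptote of the power bounded `T` and `M` is a closed
`T`-invariant subspace, then `M̃` is reducing for `U`, `X` maps `M` into `M̃`, and
`(X|_M, U|_{M̃})` is a unitary asymptote of `T|_M`. -/
theorem stmt_7 {K : Type v} [NormedAddCommGroup K] [InnerProductSpace ℂ K] [CompleteSpace K]
    (T : H →L[ℂ] H) (hT : PowerBounded T) (X : H →L[ℂ] K) (U : K →L[ℂ] K)
    (hua : IsUnitaryAsymptote T X U)
    (M : Submodule ℂ H) (hMc : IsClosed (M : Set H)) (hMinv : ∀ x ∈ M, T x ∈ M) :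
    (∀ k ∈ tildeM X U M, U k ∈ tildeM X U M) ∧
    (∀ k ∈ tildeM X U M, (star U) k ∈ tildeM X U M) ∧
    (∀ x ∈ M, X x ∈ tildeM X U M) ∧
    ∃ (XM : M →L[ℂ] tildeM X U M) (UM : tildeM X U M →L[ℂ] tildeM X U M),
      (∀ x : M, (XM x : K) = X (x : H)) ∧
      (∀ k : tildeM X U M, (UM k : K) = U (k : K)) ∧
      IsUnitaryAsymptote (restrictOp T M hMinv) XM UM :=
  stmt_7_general T hT X U hua M hMinv
end
end

section
/- Let T be a bounded linear operator on a complex Hilbert space H. If there exists a nonzero bounded operator B on H satisfying T* B T = B, then the spectral radius of T satisfies r(T) ≥ 1. -/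
/-!
Iterating `T* B T = B` gives `(T*)ⁿ B Tⁿ = B`, so `‖B‖ ≤ ‖Tⁿ‖² ‖B‖` and hence `‖Tⁿ‖ ≥ 1` for
every `n`. Gelfand's formula `r(T) = lim ‖Tⁿ‖^(1/n)` then gives `r(T) ≥ 1`.
-/

open Filter

theorem pow_mul_mul_pow_eq_of_mul_mul_eq {M : Type*} [Monoid M] {a b c : M}
    (h : a * b * c = b) (n : ℕ) : a ^ n * b * c ^ n = b := by
  induction n with
  | zero => simp
  | succ n ih =>
    calc a ^ (n + 1) * b * c ^ (n + 1) = a ^ n * (a * b * c) * c ^ n := by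
          rw [pow_succ, pow_succ']; simp only [mul_assoc]
      _ = b := by rw [h, ih]

theorem one_le_norm_pow_mul_norm_pow_of_mul_mul_eq {R : Type*} [NormedRing R] {a b c : R}
    (hb : b ≠ 0) (h : a * b * c = b) (n : ℕ) : 1 ≤ ‖a ^ n‖ * ‖c ^ n‖ := by
  have hb_pos : 0 < ‖b‖ := norm_pos_iff.mpr hb
  refine one_le_of_le_mul_right₀ hb_pos ?_
  calc ‖b‖ = ‖a ^ n * b * c ^ n‖ := by rw [pow_mul_mul_pow_eq_of_mul_mul_eq h n]
    _ ≤ ‖a ^ n‖ * ‖b‖ * ‖c ^ n‖ := norm_mul₃_le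
    _ = ‖a ^ n‖ * ‖c ^ n‖ * ‖b‖ := by ring

theorem one_le_norm_pow_of_star_mul_mul_eq {R : Type*} [NormedRing R] [StarRing R]
    [NormedStarGroup R] {a b : R} (hb : b ≠ 0) (h : star a * b * a = b) (n : ℕ) :
    1 ≤ ‖a ^ n‖ := by
  have h_norm := one_le_norm_pow_mul_norm_pow_of_mul_mul_eq hb h n
  rw [← star_pow, norm_star, ← sq] at h_norm
  exact (one_le_sq_iff₀ (norm_nonneg _)).mp h_norm

theorem one_le_spectralRadius_of_forall_one_le_norm_pow {A : Type*} [NormedRing A]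
    [NormedAlgebra ℂ A] [CompleteSpace A] {a : A} (ha : ∀ n : ℕ, 1 ≤ ‖a ^ n‖) :
    1 ≤ spectralRadius ℂ a := by
  refine ge_of_tendsto (spectrum.pow_nnnorm_pow_one_div_tendsto_nhds_spectralRadius a)
    (Eventually.of_forall fun n => ?_)
  have h_one_le : (1 : ENNReal) ≤ ‖a ^ n‖₊ := by exact_mod_cast ha n
  simpa using ENNReal.rpow_le_rpow h_one_le (z := 1 / n) (by positivity)

/-- If a nonzero bounded operator `B` satisfies `T* B T = B`, then the spectral radius
of `T` is at least `1`. -/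
theorem stmt_10 {H : Type*} [NormedAddCommGroup H] [InnerProductSpace ℂ H] [CompleteSpace H]
    (T B : H →L[ℂ] H) (hB : B ≠ 0)
    (h : ContinuousLinearMap.adjoint T ∘L B ∘L T = B) :
    1 ≤ spectralRadius ℂ T := by
  rw [← ContinuousLinearMap.star_eq_adjoint] at h
  exact one_le_spectralRadius_of_forall_one_le_norm_pow
    (one_le_norm_pow_of_star_mul_mul_eq hB h)
end
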